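/- arXiv:2409.01063 — 4 statements merged into one kernel-verified Lean document; each statement's English description precedes it below -/
import Mathlib

section
/- Let μ ∈ ℝ, ν ∈ ℂ, a₀ = tanh(μ), and define qₙ(t) = a₀ tanh(μn + ν) e^{2ia₀²t} and rₙ(t) = a₀ tanh(μn + ν) e^{-2ia₀²t}. Then (qₙ, rₙ) solves the coupled Ablowitz–Ladik system i ∂ₜqₙ = (1 − qₙrₙ)(qₙ₊₁ + qₙ₋₁) − 2qₙ and −i ∂ₜrₙ = (1 − qₙrₙ)(rₙ₊₁ + rₙ₋₁) − 2rₙ, provided tanh(μn + ν) is defined (non-singular) for all relevant n. -/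
open Complex

lemma tanh_key (m X : ℂ) (hm : Complex.cosh m ≠ 0) (hX : Complex.cosh X ≠ 0)
    (hp : Complex.cosh (X+m) ≠ 0) (hq : Complex.cosh (X-m) ≠ 0) :
    (1 - Complex.tanh m ^ 2 * Complex.tanh X ^ 2) *
      (Complex.tanh (X+m) + Complex.tanh (X-m)) =
    2 * Complex.tanh X * (1 - Complex.tanh m ^ 2) := by
  simp only [Complex.tanh_eq_sinh_div_cosh]
  rw [Complex.sinh_add, Complex.cosh_add, Complex.sinh_sub, Complex.cosh_sub] at *
  have hp' : cosh m * cosh X + sinh m * sinh X ≠ 0 := by rwa [mul_comm (cosh m), mul_comm (sinh m)]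
  have hq' : cosh m * cosh X - sinh m * sinh X ≠ 0 := by rwa [mul_comm (cosh m), mul_comm (sinh m)]
  field_simp
  linear_combination (0*Complex.cosh m^2*Complex.cosh X^2*Complex.sinh X*
    (Complex.cosh m^2*Complex.cosh X^2 - Complex.sinh m^2*Complex.sinh X^2)) *
      Complex.cosh_sq_sub_sinh_sq m

lemma hasDerivAt_cexp_mul (k : ℂ) (t : ℝ) :
    HasDerivAt (fun s : ℝ => Complex.exp (k * s)) (Complex.exp (k * t) * k) t := by
  simpa using (((hasDerivAt_id ((t : ℂ))).const_mul k).comp_ofReal).cexp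

/-- The hyperbolic background `qₙ(t) = a₀ tanh(μn+ν) e^{2ia₀²t}`,
`rₙ(t) = a₀ tanh(μn+ν) e^{−2ia₀²t}` with `a₀ = tanh μ` solves the coupled
Ablowitz–Ladik system (assuming `tanh(μn+ν)` is non-singular for all `n`). -/
theorem tanhBackground_solves_AL2 (μ : ℝ) (ν : ℂ) (a₀ : ℝ) (ha : a₀ = Real.tanh μ)
    (hns : ∀ n : ℤ, Complex.cosh ((μ : ℂ) * n + ν) ≠ 0)
    (q r : ℤ → ℝ → ℂ)
    (hq : ∀ n t, q n t = (a₀ : ℂ) * Complex.tanh ((μ : ℂ) * n + ν) *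
      Complex.exp (2 * I * a₀ ^ 2 * t))
    (hr : ∀ n t, r n t = (a₀ : ℂ) * Complex.tanh ((μ : ℂ) * n + ν) *
      Complex.exp (-(2 * I * a₀ ^ 2 * t))) :
    (∀ (n : ℤ) (t : ℝ),
      I * deriv (q n) t =
        (1 - q n t * r n t) * (q (n + 1) t + q (n - 1) t) - 2 * q n t) ∧
    (∀ (n : ℤ) (t : ℝ),
      -I * deriv (r n) t =
        (1 - q n t * r n t) * (r (n + 1) t + r (n - 1) t) - 2 * r n t) := by
  have hcm : Complex.cosh (μ : ℂ) ≠ 0 := by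
    rw [← Complex.ofReal_cosh]
    exact_mod_cast (Real.cosh_pos (x := μ)).ne'
  have ha' : (a₀ : ℂ) = Complex.tanh (μ : ℂ) := by
    rw [ha, Complex.ofReal_tanh]
  have key : ∀ n : ℤ,
      (1 - (a₀:ℂ)^2 * Complex.tanh ((μ:ℂ)*n+ν) ^ 2) *
        (Complex.tanh (((μ:ℂ)*n+ν)+μ) + Complex.tanh (((μ:ℂ)*n+ν)-μ)) =
      2 * Complex.tanh ((μ:ℂ)*n+ν) * (1 - (a₀:ℂ)^2) := by
    intro n
    have hp := hns (n+1)
    have hq := hns (n-1)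
    push_cast at hp hq
    rw [show (μ:ℂ)*((n:ℂ)+1)+ν = ((μ:ℂ)*n+ν)+(μ:ℂ) by ring] at hp
    rw [show (μ:ℂ)*((n:ℂ)-1)+ν = ((μ:ℂ)*n+ν)-(μ:ℂ) by ring] at hq
    rw [ha']
    exact tanh_key (μ:ℂ) ((μ:ℂ)*n+ν) hcm (hns n) hp hq
  have hE : ∀ t : ℝ, Complex.exp (2 * I * a₀ ^ 2 * t) *
      Complex.exp (-(2 * I * a₀ ^ 2 * t)) = 1 := by
    intro t
    rw [← Complex.exp_add]
    simp
  have hdq : ∀ n t, deriv (q n) t = (a₀ : ℂ) * Complex.tanh ((μ : ℂ) * n + ν) *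
      (Complex.exp (2 * I * a₀ ^ 2 * t) * (2 * I * a₀ ^ 2)) := by
    intro n t
    have hfe : q n = fun s : ℝ => (a₀ : ℂ) * Complex.tanh ((μ : ℂ) * n + ν) *
        Complex.exp (2 * I * a₀ ^ 2 * s) := funext (hq n)
    rw [hfe]
    exact ((hasDerivAt_cexp_mul (2 * I * a₀ ^ 2) t).const_mul
      ((a₀ : ℂ) * Complex.tanh ((μ : ℂ) * n + ν))).deriv
  have hdr : ∀ n t, deriv (r n) t = (a₀ : ℂ) * Complex.tanh ((μ : ℂ) * n + ν) *
      (Complex.exp (-(2 * I * a₀ ^ 2 * t)) * (-(2 * I * a₀ ^ 2))) := by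
    intro n t
    have hfe : r n = fun s : ℝ => (a₀ : ℂ) * Complex.tanh ((μ : ℂ) * n + ν) *
        Complex.exp (-(2 * I * a₀ ^ 2 * s)) := funext (hr n)
    rw [hfe]
    have := ((hasDerivAt_cexp_mul (-(2 * I * a₀ ^ 2)) t).const_mul
      ((a₀ : ℂ) * Complex.tanh ((μ : ℂ) * n + ν))).deriv
    simp only [neg_mul] at this ⊢
    rw [this]
  constructor
  · intro n t
    rw [hdq n t, hq n t, hr n t, hq (n+1) t, hq (n-1) t]
    push_cast
    rw [show (μ:ℂ)*((n:ℂ)+1)+ν = ((μ:ℂ)*n+ν)+(μ:ℂ) by ring,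
        show (μ:ℂ)*((n:ℂ)-1)+ν = ((μ:ℂ)*n+ν)-(μ:ℂ) by ring]
    set Tn := Complex.tanh ((μ:ℂ)*n+ν)
    set Tp := Complex.tanh (((μ:ℂ)*n+ν)+(μ:ℂ))
    set Tm := Complex.tanh (((μ:ℂ)*n+ν)-(μ:ℂ))
    set E := Complex.exp (2 * I * a₀ ^ 2 * t)
    set E' := Complex.exp (-(2 * I * a₀ ^ 2 * t))
    linear_combination (2*(a₀:ℂ)^3*Tn*E) * Complex.I_sq +
      ((a₀:ℂ)^3*Tn^2*E*(Tp+Tm)) * hE t + (-(a₀:ℂ)*E) * key n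
  · intro n t
    rw [hdr n t, hq n t, hr n t, hr (n+1) t, hr (n-1) t]
    push_cast
    rw [show (μ:ℂ)*((n:ℂ)+1)+ν = ((μ:ℂ)*n+ν)+(μ:ℂ) by ring,
        show (μ:ℂ)*((n:ℂ)-1)+ν = ((μ:ℂ)*n+ν)-(μ:ℂ) by ring]
    set Tn := Complex.tanh ((μ:ℂ)*n+ν)
    set Tp := Complex.tanh (((μ:ℂ)*n+ν)+(μ:ℂ))
    set Tm := Complex.tanh (((μ:ℂ)*n+ν)-(μ:ℂ))
    set E := Complex.exp (2 * I * a₀ ^ 2 * t)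
    set E' := Complex.exp (-(2 * I * a₀ ^ 2 * t))
    linear_combination (2*(a₀:ℂ)^3*Tn*E') * Complex.I_sq +
      ((a₀:ℂ)^3*Tn^2*E'*(Tp+Tm)) * hE t + (-(a₀:ℂ)*E') * key n
end

section
/- With the plane wave background qₙ = a₀e^{2iδa₀²t}, rₙ = δa₀e^{-2iδa₀²t}, αₙ = 1 − qₙrₙ = 1 − δa₀², and the quantities λ, η, ξ defined by e^λ = (e^k + e^{-k} + κ)/(2√(1−δa₀²)), η = −(i/2)(e^k−e^{-k})κ, ξ(k) = (e^k − e^{-k} − κ)/(2a₀) where κ = √((e^k−e^{-k})² + 4δa₀²), the functions φₙ(t) = (c e^{λn+ηt} + d e^{−(λn+ηt)})e^{iδa₀²t} and ψₙ(t) = (−c ξ(k) e^{λn+ηt} + d ξ(−k) e^{−(λn+ηt)})e^{−iδa₀²t} satisfy the discrete spectral problem φₙ₊₁ = αₙ^{−1/2}(e^k φₙ + qₙ ψₙ), ψₙ₊₁ = αₙ^{−1/2}(rₙ φₙ + e^{−k} ψₙ). -/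
open Complex

/-- On the plane wave background `qₙ = a₀e^{2iδa₀²t}`, `rₙ = δa₀e^{−2iδa₀²t}`,
the functions `φₙ, ψₙ` built from `e^λ, eta, ξ` satisfy the discrete (n-part)
spectral problem `φₙ₊₁ = αₙ^{−1/2}(e^k φₙ + qₙψₙ)`,
`ψₙ₊₁ = αₙ^{−1/2}(rₙφₙ + e^{−k}ψₙ)` with `αₙ = 1 − qₙrₙ = 1 − δa₀²`. -/
theorem planeWave_spectral_problem (a₀ δ : ℝ) (ha : a₀ ≠ 0) (hδ : δ = 1 ∨ δ = -1)
    (hα : 1 - δ * a₀ ^ 2 > 0) (k κ c d : ℂ)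
    (hκ : κ ^ 2 = (Complex.exp k - Complex.exp (-k)) ^ 2 + 4 * δ * a₀ ^ 2)
    (q r : ℤ → ℝ → ℂ)
    (hq : ∀ n t, q n t = (a₀ : ℂ) * Complex.exp (2 * I * δ * a₀ ^ 2 * t))
    (hr : ∀ n t, r n t = (δ : ℂ) * a₀ * Complex.exp (-(2 * I * δ * a₀ ^ 2 * t)))
    (elam eta xik xik' : ℂ)
    (helam : elam = (Complex.exp k + Complex.exp (-k) + κ) /
      (2 * (Real.sqrt (1 - δ * a₀ ^ 2) : ℂ)))
    (heta : eta = -(I / 2) * (Complex.exp k - Complex.exp (-k)) * κ)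
    (hxik : xik = (Complex.exp k - Complex.exp (-k) - κ) / (2 * a₀))
    (hxik' : xik' = (-(Complex.exp k - Complex.exp (-k)) - κ) / (2 * a₀))
    (φ ψ : ℤ → ℝ → ℂ)
    (hφ : ∀ n t, φ n t = (c * elam ^ n * Complex.exp (eta * t) +
      d * elam ^ (-n) * Complex.exp (-(eta * t))) * Complex.exp (I * δ * a₀ ^ 2 * t))
    (hψ : ∀ n t, ψ n t = (-c * xik * elam ^ n * Complex.exp (eta * t) +
      d * xik' * elam ^ (-n) * Complex.exp (-(eta * t))) *
        Complex.exp (-(I * δ * a₀ ^ 2 * t))) :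
    ∀ (n : ℤ) (t : ℝ),
      φ (n + 1) t = ((Real.sqrt (1 - δ * a₀ ^ 2) : ℂ))⁻¹ *
        (Complex.exp k * φ n t + q n t * ψ n t) ∧
      ψ (n + 1) t = ((Real.sqrt (1 - δ * a₀ ^ 2) : ℂ))⁻¹ *
        (r n t * φ n t + Complex.exp (-k) * ψ n t) := by
  intro n t
  set s : ℂ := (Real.sqrt (1 - δ * a₀ ^ 2) : ℂ) with hsdef
  have hsr : (0:ℝ) < Real.sqrt (1 - δ * a₀ ^ 2) := Real.sqrt_pos.mpr hα
  have hs0 : s ≠ 0 := by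
    simp only [hsdef, ne_eq, Complex.ofReal_eq_zero]; exact ne_of_gt hsr
  have hs2 : s ^ 2 = 1 - (δ:ℂ) * (a₀:ℂ) ^ 2 := by
    rw [hsdef]; norm_cast; rw [Real.sq_sqrt hα.le]
  have ha0 : (a₀ : ℂ) ≠ 0 := by exact_mod_cast ha
  have hE : Complex.exp k * Complex.exp (-k) = 1 := by
    rw [← Complex.exp_add]; simp
  set E := Complex.exp k with hEdef
  set E' := Complex.exp (-k) with hE'def
  have hsel : s * elam = (E + E' + κ) / 2 := by
    rw [helam]; field_simp
  have helam0 : elam ≠ 0 := by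
    intro h
    have hk0 : E + E' + κ = 0 := by
      have h2 := hsel
      rw [h, mul_zero] at h2
      linear_combination -2 * h2
    have hcontr : s ^ 2 = 0 := by
      rw [hs2]
      linear_combination (1/4) * hκ - hE - ((κ - E - E')/4) * hk0
    exact hs0 (pow_eq_zero_iff (by norm_num) |>.mp hcontr)
  have hmul : elam * (E + E' - κ) = 2 * s := by
    apply mul_left_cancel₀ hs0
    calc s * (elam * (E + E' - κ)) = (s * elam) * (E + E' - κ) := by ring
      _ = (E + E' + κ) / 2 * (E + E' - κ) := by rw [hsel]
      _ = s * (2 * s) := by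
          rw [show s * (2 * s) = 2 * s ^ 2 from by ring, hs2]
          linear_combination -(1/2) * hκ + 2 * hE
  have hseli : s * elam⁻¹ = (E + E' - κ) / 2 := by
    apply mul_left_cancel₀ helam0
    calc elam * (s * elam⁻¹) = s * (elam * elam⁻¹) := by ring
      _ = s := by rw [mul_inv_cancel₀ helam0, mul_one]
      _ = elam * ((E + E' - κ) / 2) := by linear_combination -(1/2) * hmul
  have hax : (a₀:ℂ) * xik = (E - E' - κ) / 2 := by
    rw [hxik]; field_simp
  have hax' : (a₀:ℂ) * xik' = (-(E - E') - κ) / 2 := by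
    rw [hxik']; field_simp
  have h1 : s * elam = E - (a₀:ℂ) * xik := by linear_combination hsel + hax
  have h2 : s * elam⁻¹ = E + (a₀:ℂ) * xik' := by linear_combination hseli - hax'
  have h3 : s * elam * xik = E' * xik - (δ:ℂ) * a₀ := by
    apply mul_left_cancel₀ ha0
    have h3' : s * elam * ((a₀:ℂ) * xik) = E' * ((a₀:ℂ) * xik) - (δ:ℂ) * (a₀:ℂ)^2 := by
      rw [hax]
      linear_combination ((E - E' - κ)/2) * hsel - (1/4) * hκ
    linear_combination h3'
  have h4 : s * elam⁻¹ * xik' = (δ:ℂ) * a₀ + E' * xik' := by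
    apply mul_left_cancel₀ ha0
    have h4' : s * elam⁻¹ * ((a₀:ℂ) * xik') = (δ:ℂ) * (a₀:ℂ)^2 + E' * ((a₀:ℂ) * xik') := by
      rw [hax']
      linear_combination ((-(E - E') - κ)/2) * hseli + (1/4) * hκ
    linear_combination h4'
  -- derived forms with s⁻¹
  have h1' : elam = s⁻¹ * (E - (a₀:ℂ) * xik) := by
    rw [← h1]; field_simp
  have h2' : elam⁻¹ = s⁻¹ * (E + (a₀:ℂ) * xik') := by
    rw [← h2]; field_simp
  have h3' : xik * elam = s⁻¹ * (E' * xik - (δ:ℂ) * a₀) := by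
    rw [← h3]; field_simp
  have h4' : xik' * elam⁻¹ = s⁻¹ * ((δ:ℂ) * a₀ + E' * xik') := by
    rw [← h4]; field_simp
  -- exponentials
  set u : ℂ := Complex.exp (I * (δ:ℂ) * (a₀:ℂ) ^ 2 * (t:ℂ)) with hudef
  have hu0 : u ≠ 0 := Complex.exp_ne_zero _
  have hiu : u * u⁻¹ = 1 := mul_inv_cancel₀ hu0
  have hu2 : Complex.exp (2 * I * (δ:ℂ) * (a₀:ℂ) ^ 2 * (t:ℂ)) = u * u := by
    rw [show (2 * I * (δ:ℂ) * (a₀:ℂ) ^ 2 * (t:ℂ)) =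
      (I * (δ:ℂ) * (a₀:ℂ) ^ 2 * (t:ℂ)) + (I * (δ:ℂ) * (a₀:ℂ) ^ 2 * (t:ℂ)) from by ring,
      Complex.exp_add, hudef]
  have hu2' : Complex.exp (-(2 * I * (δ:ℂ) * (a₀:ℂ) ^ 2 * (t:ℂ))) = u⁻¹ * u⁻¹ := by
    rw [Complex.exp_neg, hu2, mul_inv]
  have huinv : Complex.exp (-(I * (δ:ℂ) * (a₀:ℂ) ^ 2 * (t:ℂ))) = u⁻¹ := by
    rw [Complex.exp_neg, hudef]
  set A : ℂ := Complex.exp (eta * (t:ℂ)) with hAdef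
  have hAinv : Complex.exp (-(eta * (t:ℂ))) = A⁻¹ := by
    rw [Complex.exp_neg, hAdef]
  -- powers of elam
  set P : ℂ := elam ^ n with hPdef
  have hz1 : elam ^ (n + 1) = P * elam := by
    rw [hPdef, zpow_add_one₀ helam0]
  have hz2 : elam ^ (-(n + 1)) = P⁻¹ * elam⁻¹ := by
    rw [zpow_neg, hz1, mul_inv]
  have hz3 : elam ^ (-n) = P⁻¹ := by rw [zpow_neg, hPdef]
  constructor
  · rw [hφ, hφ, hψ, hq, hz1, hz2, hz3, hu2, hAinv, huinv]
    linear_combination (c * P * A * u) * h1' + (d * P⁻¹ * A⁻¹ * u) * h2' +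
      (s⁻¹ * (a₀:ℂ) * (c * xik * P * A - d * xik' * P⁻¹ * A⁻¹) * u) * hiu
  · rw [hψ, hψ, hφ, hr, hz1, hz2, hz3, hu2', hAinv, huinv]
    linear_combination (-c * P * A * u⁻¹) * h3' + (d * P⁻¹ * A⁻¹ * u⁻¹) * h4' +
      (-(s⁻¹ * (δ:ℂ) * (a₀:ℂ) * (c * P * A + d * P⁻¹ * A⁻¹) * u⁻¹)) * hiu
end

section
/- With the same plane wave background and definitions of λ, η, ξ as before, the functions φₙ(t) = (c e^{λn+ηt} + d e^{−(λn+ηt)})e^{iδa₀²t} and ψₙ(t) = (−c ξ(k) e^{λn+ηt} + d ξ(−k) e^{−(λn+ηt)})e^{−iδa₀²t} satisfy the time evolution 2i ∂ₜ(φₙ, ψₙ)ᵀ = N (φₙ, ψₙ)ᵀ, where N = [[(e^k−e^{−k})² − qₙrₙ₋₁ − qₙ₋₁rₙ, 2e^k qₙ − 2e^{−k}qₙ₋₁],[2e^k rₙ₋₁ − 2e^{−k}rₙ, qₙrₙ₋₁ + qₙ₋₁rₙ − (e^k−e^{−k})²]]. -/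
open Complex

set_option maxHeartbeats 1000000 in
/-- On the plane wave background, the functions `φₙ, ψₙ` satisfy the time
evolution `2i ∂ₜ(φₙ,ψₙ)ᵀ = N (φₙ,ψₙ)ᵀ`. -/
theorem planeWave_time_evolution (a₀ δ : ℝ) (ha : a₀ ≠ 0) (hδ : δ = 1 ∨ δ = -1)
    (hα : 1 - δ * a₀ ^ 2 > 0) (k κ c d : ℂ)
    (hκ : κ ^ 2 = (Complex.exp k - Complex.exp (-k)) ^ 2 + 4 * δ * a₀ ^ 2)
    (q r : ℤ → ℝ → ℂ)
    (hq : ∀ n t, q n t = (a₀ : ℂ) * Complex.exp (2 * I * δ * a₀ ^ 2 * t))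
    (hr : ∀ n t, r n t = (δ : ℂ) * a₀ * Complex.exp (-(2 * I * δ * a₀ ^ 2 * t)))
    (elam eta xik xik' : ℂ)
    (helam : elam = (Complex.exp k + Complex.exp (-k) + κ) /
      (2 * (Real.sqrt (1 - δ * a₀ ^ 2) : ℂ)))
    (heta : eta = -(I / 2) * (Complex.exp k - Complex.exp (-k)) * κ)
    (hxik : xik = (Complex.exp k - Complex.exp (-k) - κ) / (2 * a₀))
    (hxik' : xik' = (-(Complex.exp k - Complex.exp (-k)) - κ) / (2 * a₀))
    (φ ψ : ℤ → ℝ → ℂ)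
    (hφ : ∀ n t, φ n t = (c * elam ^ n * Complex.exp (eta * t) +
      d * elam ^ (-n) * Complex.exp (-(eta * t))) * Complex.exp (I * δ * a₀ ^ 2 * t))
    (hψ : ∀ n t, ψ n t = (-c * xik * elam ^ n * Complex.exp (eta * t) +
      d * xik' * elam ^ (-n) * Complex.exp (-(eta * t))) *
        Complex.exp (-(I * δ * a₀ ^ 2 * t))) :
    ∀ (n : ℤ) (t : ℝ),
      2 * I * deriv (φ n) t =
        ((Complex.exp k - Complex.exp (-k)) ^ 2
            - q n t * r (n - 1) t - q (n - 1) t * r n t) * φ n t +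
          (2 * Complex.exp k * q n t - 2 * Complex.exp (-k) * q (n - 1) t) * ψ n t ∧
      2 * I * deriv (ψ n) t =
        (2 * Complex.exp k * r (n - 1) t - 2 * Complex.exp (-k) * r n t) * φ n t +
          (q n t * r (n - 1) t + q (n - 1) t * r n t
            - (Complex.exp k - Complex.exp (-k)) ^ 2) * ψ n t := by
  intro n t
  have ha' : (a₀ : ℂ) ≠ 0 := by exact_mod_cast ha
  have hder : ∀ (μ : ℂ), ∀ t : ℝ, HasDerivAt (fun s : ℝ => Complex.exp (μ * s))
      (μ * Complex.exp (μ * t)) t := by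
    intro μ t
    have h0 : HasDerivAt (fun s : ℝ => μ * (s : ℂ)) μ t := by
      simpa using (Complex.ofRealCLM.hasDerivAt (x := t)).const_mul μ
    simpa [mul_comm] using h0.cexp
  -- derivative of φ n
  have hφd : HasDerivAt (φ n)
      ((c * elam ^ n * (eta * Complex.exp (eta * t)) +
        d * elam ^ (-n) * -(eta * Complex.exp (-(eta * t)))) *
          Complex.exp (I * δ * a₀ ^ 2 * t) +
       (c * elam ^ n * Complex.exp (eta * t) +
        d * elam ^ (-n) * Complex.exp (-(eta * t))) *
          (I * δ * a₀ ^ 2 * Complex.exp (I * δ * a₀ ^ 2 * t))) t := by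
    have h := (((hder eta t).const_mul (c * elam ^ n)).add
        ((hder (-eta) t).const_mul (d * elam ^ (-n)))).mul (hder (I * (δ : ℂ) * (a₀ : ℂ) ^ 2) t)
    simp only [neg_mul] at h
    have hfun : φ n = fun s : ℝ => (c * elam ^ n * Complex.exp (eta * s) +
        d * elam ^ (-n) * Complex.exp (-(eta * s))) * Complex.exp (I * δ * a₀ ^ 2 * s) :=
      funext (hφ n)
    rw [hfun]
    exact h
  -- derivative of ψ n
  have hψd : HasDerivAt (ψ n)
      ((-c * xik * elam ^ n * (eta * Complex.exp (eta * t)) +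
        d * xik' * elam ^ (-n) * -(eta * Complex.exp (-(eta * t)))) *
          Complex.exp (-(I * δ * a₀ ^ 2 * t)) +
       (-c * xik * elam ^ n * Complex.exp (eta * t) +
        d * xik' * elam ^ (-n) * Complex.exp (-(eta * t))) *
          (-(I * δ * a₀ ^ 2 * Complex.exp (-(I * δ * a₀ ^ 2 * t))))) t := by
    have h := (((hder eta t).const_mul (-c * xik * elam ^ n)).add
        ((hder (-eta) t).const_mul (d * xik' * elam ^ (-n)))).mul
        (hder (-(I * (δ : ℂ) * (a₀ : ℂ) ^ 2)) t)
    simp only [neg_mul] at h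
    have hfun : ψ n = fun s : ℝ => (-c * xik * elam ^ n * Complex.exp (eta * s) +
        d * xik' * elam ^ (-n) * Complex.exp (-(eta * s))) *
          Complex.exp (-(I * δ * a₀ ^ 2 * s)) := funext (hψ n)
    rw [hfun]
    simp only [neg_mul]
    exact h
  have hP2 : Complex.exp (2 * I * (δ : ℂ) * (a₀ : ℂ) ^ 2 * (t : ℂ)) =
      Complex.exp (I * (δ : ℂ) * (a₀ : ℂ) ^ 2 * (t : ℂ)) *
        Complex.exp (I * (δ : ℂ) * (a₀ : ℂ) ^ 2 * (t : ℂ)) := by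
    rw [← Complex.exp_add]; ring_nf
  have hQ2 : Complex.exp (-(2 * I * (δ : ℂ) * (a₀ : ℂ) ^ 2 * (t : ℂ))) =
      Complex.exp (-(I * (δ : ℂ) * (a₀ : ℂ) ^ 2 * (t : ℂ))) *
        Complex.exp (-(I * (δ : ℂ) * (a₀ : ℂ) ^ 2 * (t : ℂ))) := by
    rw [← Complex.exp_add]; ring_nf
  have hPQ : Complex.exp (I * (δ : ℂ) * (a₀ : ℂ) ^ 2 * (t : ℂ)) *
      Complex.exp (-(I * (δ : ℂ) * (a₀ : ℂ) ^ 2 * (t : ℂ))) = 1 := by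
    rw [← Complex.exp_add]; simp
  have hI : (I : ℂ) ^ 2 = -1 := Complex.I_sq
  rw [hφd.deriv, hψd.deriv]
  simp only [hφ, hψ, hq, hr, hP2, hQ2]
  set s : ℂ := Complex.exp k - Complex.exp (-k) with hs
  set E : ℂ := Complex.exp (eta * t) with hE
  set F : ℂ := Complex.exp (-(eta * t)) with hF
  set P : ℂ := Complex.exp (I * (δ : ℂ) * (a₀ : ℂ) ^ 2 * (t : ℂ)) with hP
  set Q : ℂ := Complex.exp (-(I * (δ : ℂ) * (a₀ : ℂ) ^ 2 * (t : ℂ))) with hQ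
  set A : ℂ := elam ^ n with hA
  set B : ℂ := elam ^ (-n) with hB
  constructor
  · linear_combination (norm := (ring_nf; try simp only [Complex.I_sq]; try field_simp [ha']; try ring_nf; try field_simp [ha']; try ring1))
      (2 * I * (c * A * E - d * B * F) * P) * heta
      + (2 * (a₀ : ℂ) * s * P * P * Q * c * A * E) * hxik
      - (2 * (a₀ : ℂ) * s * P * P * Q * d * B * F) * hxik'
      + (2 * (δ : ℂ) * (a₀ : ℂ) ^ 2 * (P * Q + 1) * (c * A * E + d * B * F) * P
          - 2 * (a₀ : ℂ) * s * P * (-c * ((s - κ) / (2 * a₀)) * A * E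
              + d * ((-s - κ) / (2 * a₀)) * B * F)) * hPQ
  · linear_combination (norm := (ring_nf; try simp only [Complex.I_sq]; try field_simp [ha']; try ring_nf; try field_simp [ha']; try ring1))
      (2 * I * (-c * xik * A * E - d * xik' * B * F) * Q) * heta
      + (c * A * E * Q * (-(s * κ) - 2 * (δ : ℂ) * (a₀ : ℂ) ^ 2
          + 2 * (δ : ℂ) * (a₀ : ℂ) ^ 2 * P * P * Q * Q - s ^ 2)) * hxik
      + (d * B * F * Q * (-(s * κ) + 2 * (δ : ℂ) * (a₀ : ℂ) ^ 2
          - 2 * (δ : ℂ) * (a₀ : ℂ) ^ 2 * P * P * Q * Q + s ^ 2)) * hxik'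
      + ((s / (2 * (a₀ : ℂ))) * Q * (c * A * E + d * B * F)) * hκ
      + (2 * (δ : ℂ) * (a₀ : ℂ) ^ 2 * (P * Q + 1) * Q *
            (c * ((s - κ) / (2 * a₀)) * A * E - d * ((-s - κ) / (2 * a₀)) * B * F)
          - 2 * (δ : ℂ) * (a₀ : ℂ) * s * Q * (c * A * E + d * B * F)) * hPQ
end

section
/- Let N = 2m+2, let A, T ∈ GL(N, ℂ) satisfy A^{−1} = TA*T^{−1} and TT* = δI (δ = ±1), and let Φₙ be an N-vector of complex functions. Define Fₙ = det(AΦₙ, A³Φₙ, …, A^{2m+1}Φₙ; TΦₙ*, T(A^{−2}Φₙ)*, …, T(A^{−2m}Φₙ)*), where the semicolon just separates the two groups of N/2 columns each. Then Fₙ* = (−δ)^{m+1} det(A^{2m+1}T)^{−1} Fₙ. -/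
open Matrix Equiv

private theorem rev_succ_decompose (n : ℕ) :
    (Fin.revPerm : Equiv.Perm (Fin (n + 1))) =
      Equiv.Perm.decomposeFin.symm (Fin.last n, Fin.revPerm * finRotate n) := by
  ext i
  refine Fin.cases ?_ (fun x => ?_) i
  · simp only [Equiv.Perm.decomposeFin_symm_apply_zero, Fin.revPerm_apply]
    rw [Fin.val_rev]
    simp
  · cases n with
    | zero => exact x.elim0
    | succ n' =>
      rw [Equiv.Perm.decomposeFin_symm_apply_succ]
      simp only [Equiv.Perm.mul_apply, Fin.revPerm_apply]
      by_cases hx : x = Fin.last n'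
      · subst hx
        have h1 : finRotate (n' + 1) (Fin.last n') = 0 := by
          rw [Fin.ext_iff, coe_finRotate]; simp
        rw [h1]
        have h2 : (Fin.rev (0 : Fin (n' + 1))).succ = Fin.last (n' + 1) := by
          rw [Fin.ext_iff, Fin.val_succ, Fin.val_rev]; simp
        rw [h2, Equiv.swap_apply_right]
        rw [Fin.val_rev]
        simp
      · have hxlt : (x : ℕ) < n' := by
          rcases lt_or_eq_of_le (Nat.lt_succ_iff.mp x.isLt) with h | h
          · exact h
          · exact absurd (Fin.ext h) hx
        have h1 : (finRotate (n' + 1) x : ℕ) = x + 1 := by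
          rw [coe_finRotate, if_neg hx]
        have hval : ((Fin.rev (finRotate (n' + 1) x)).succ : ℕ) = n' - x := by
          rw [Fin.val_succ, Fin.val_rev, h1]; omega
        rw [Equiv.swap_apply_of_ne_of_ne]
        · rw [hval, Fin.val_rev, Fin.val_succ]
          omega
        · intro h; rw [Fin.ext_iff, hval] at h; simp at h; omega
        · intro h; rw [Fin.ext_iff, hval, Fin.val_last] at h; omega

private theorem sign_revPerm_succ (n : ℕ) :
    Equiv.Perm.sign (Fin.revPerm : Equiv.Perm (Fin (n + 2))) =
      -(Equiv.Perm.sign (Fin.revPerm : Equiv.Perm (Fin (n + 1))) * (-1) ^ n) := by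
  rw [rev_succ_decompose (n + 1), Equiv.Perm.decomposeFin.symm_sign]
  have h0 : (Fin.last (n + 1)) ≠ 0 := by
    intro h; rw [Fin.ext_iff] at h; simp at h
  rw [if_neg h0, _root_.map_mul, sign_finRotate, neg_mul, one_mul]
  rw [Nat.add_sub_cancel]

private theorem sign_revPerm_even (m : ℕ) :
    Equiv.Perm.sign (Fin.revPerm : Equiv.Perm (Fin (2 * m + 2))) = (-1) ^ (m + 1) := by
  induction m with
  | zero => decide
  | succ m ih =>
    have h1 := sign_revPerm_succ (2 * m + 2)
    have h2 := sign_revPerm_succ (2 * m + 1)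
    have h2' : (2 * m + 1) + 2 = (2 * m + 2) + 1 := by ring
    rw [h2'] at h2
    have h3 : (2 * m + 2) + 1 + 1 = 2 * (m + 1) + 2 := by ring
    rw [h3] at h1
    rw [h1, h2, ih]
    have he : (-1 : ℤˣ) ^ (2 * m + 2) = 1 := Even.neg_one_pow ⟨m + 1, by ring⟩
    have ho : (-1 : ℤˣ) ^ (2 * m + 1) = -1 := Odd.neg_one_pow ⟨m, by ring⟩
    rw [he, ho, pow_succ _ (m + 1), mul_neg_one]
    simp
/-- Conjugation symmetry of the quasi double Casoratian `Fₙ`: with `A⁻¹ = TA*T⁻¹`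
and `TT* = δI`, the determinant `Fₙ` whose columns are
`AΦₙ, A³Φₙ, …, A^{2m+1}Φₙ; TΦₙ*, T(A^{−2}Φₙ)*, …, T(A^{−2m}Φₙ)*`
satisfies `Fₙ* = (−δ)^{m+1} det(A^{2m+1}T)⁻¹ Fₙ`. -/
theorem casoratian_conjugation (m : ℕ) (δ : ℂ) (hδ : δ = 1 ∨ δ = -1)
    (A T : Matrix (Fin (2 * m + 2)) (Fin (2 * m + 2)) ℂ)
    (hAu : IsUnit A.det) (hTu : IsUnit T.det)
    (hA : A⁻¹ = T * (A.map (starRingEnd ℂ)) * T⁻¹)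
    (hT : T * (T.map (starRingEnd ℂ)) = δ • 1)
    (Φ : ℤ → Fin (2 * m + 2) → ℂ) (n : ℤ) :
    let col : Fin (2 * m + 2) → Fin (2 * m + 2) → ℂ := fun j =>
      if h : (j : ℕ) < m + 1 then
        (A ^ (2 * (j : ℕ) + 1)).mulVec (Φ n)
      else
        T.mulVec (fun i => (starRingEnd ℂ)
          ((A ^ (-(2 * ((j : ℕ) - (m + 1)) : ℤ))).mulVec (Φ n) i))
    let F : ℂ := Matrix.det (Matrix.of fun i j => col j i)
    (starRingEnd ℂ) F = (-δ) ^ (m + 1) * ((A ^ (2 * m + 1) * T).det)⁻¹ * F := by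
  intro col F
  set c := starRingEnd ℂ with hc
  -- basic invertibility facts
  have hTT : T⁻¹ * T = 1 := nonsing_inv_mul T hTu
  have hTT' : T * T⁻¹ = 1 := mul_nonsing_inv T hTu
  have hAA : A⁻¹ * A = 1 := nonsing_inv_mul A hAu
  have hAA' : A * A⁻¹ = 1 := mul_nonsing_inv A hAu
  have hδδ : δ * δ = 1 := by rcases hδ with h | h <;> rw [h] <;> norm_num
  have hTc : T.map c = δ • T⁻¹ := by
    calc T.map c = T⁻¹ * (T * T.map c) := by rw [← mul_assoc, hTT, one_mul]
    _ = T⁻¹ * (δ • 1) := by rw [hT]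
    _ = δ • T⁻¹ := by rw [Matrix.mul_smul, mul_one]
  have hAc : A.map c = T⁻¹ * A⁻¹ * T := by
    have h1 : A⁻¹ * T = T * A.map c := by
      rw [hA, mul_assoc, hTT, mul_one]
    calc A.map c = T⁻¹ * (T * A.map c) := by rw [← mul_assoc, hTT, one_mul]
    _ = T⁻¹ * (A⁻¹ * T) := by rw [h1]
    _ = T⁻¹ * A⁻¹ * T := by rw [mul_assoc]
  have conj_pow : ∀ (B : Matrix (Fin (2 * m + 2)) (Fin (2 * m + 2)) ℂ) (k : ℕ),
      (T⁻¹ * B * T) ^ k = T⁻¹ * B ^ k * T := by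
    intro B k
    induction k with
    | zero => rw [pow_zero, pow_zero, mul_one, hTT]
    | succ k ih =>
      rw [pow_succ, pow_succ, ih]
      calc T⁻¹ * B ^ k * T * (T⁻¹ * B * T)
          = T⁻¹ * B ^ k * ((T * T⁻¹) * (B * T)) := by simp only [Matrix.mul_assoc]
        _ = T⁻¹ * (B ^ k * B) * T := by
            rw [hTT', one_mul]; simp only [Matrix.mul_assoc]
  have hdetpow : ∀ k : ℕ, IsUnit (A ^ k).det := fun k => by
    rw [Matrix.det_pow]; exact hAu.pow k
  have hPowCancel : ∀ k : ℕ, A⁻¹ ^ k * A ^ k = 1 := fun k => by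
    rw [Matrix.inv_pow', nonsing_inv_mul _ (hdetpow k)]
  have hApowmap : ∀ k : ℕ, (A ^ k).map c = T⁻¹ * A⁻¹ ^ k * T := by
    intro k
    have h1 : (A ^ k).map c = (A.map c) ^ k := by
      simpa using _root_.map_pow (RingHom.mapMatrix c) A k
    rw [h1, hAc, conj_pow]
  have hAinvmap : ∀ k : ℕ, ((A ^ k)⁻¹).map c = T⁻¹ * A ^ k * T := by
    intro k
    have h1 : (A ^ k).map c * (((A ^ k)⁻¹).map c) = 1 := by
      rw [← Matrix.map_mul, mul_nonsing_inv _ (hdetpow k)]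
      exact Matrix.map_one _ (map_zero c) (map_one c)
    have h2 : (A ^ k).map c * (T⁻¹ * A ^ k * T) = 1 := by
      rw [hApowmap]
      calc T⁻¹ * A⁻¹ ^ k * T * (T⁻¹ * A ^ k * T)
          = T⁻¹ * A⁻¹ ^ k * ((T * T⁻¹) * (A ^ k * T)) := by simp only [Matrix.mul_assoc]
        _ = T⁻¹ * (A⁻¹ ^ k * A ^ k) * T := by
            rw [hTT', one_mul]; simp only [Matrix.mul_assoc]
        _ = 1 := by rw [hPowCancel, mul_one, hTT]
    exact Matrix.right_inv_eq_right_inv h1 h2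
  -- conjugating mulVec entrywise
  have hcmv : ∀ (X : Matrix (Fin (2 * m + 2)) (Fin (2 * m + 2)) ℂ) (v : Fin (2 * m + 2) → ℂ)
      (i : Fin (2 * m + 2)), c (X.mulVec v i) = (X.map c).mulVec (fun l => c (v l)) i := by
    intro X v i
    simp [Matrix.mulVec, dotProduct, map_sum]
  set P : Matrix (Fin (2 * m + 2)) (Fin (2 * m + 2)) ℂ := T⁻¹ * A⁻¹ ^ (2 * m + 1) with hP
  set w : Fin (2 * m + 2) → ℂ := fun j => if (j : ℕ) < m + 1 then 1 else δ with hw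
  have hcol : ∀ j : Fin (2 * m + 2), col j =
      if h : (j : ℕ) < m + 1 then
        (A ^ (2 * (j : ℕ) + 1)).mulVec (Φ n)
      else
        T.mulVec (fun i => c ((A ^ (-(2 * ((j : ℕ) - (m + 1)) : ℤ))).mulVec (Φ n) i)) :=
    fun j => rfl
  -- the key column identity
  have key : ∀ (j i : Fin (2 * m + 2)),
      c (col j i) = w j * P.mulVec (col (Fin.rev j)) i := by
    intro j i
    have hjrev : (Fin.rev j : ℕ) = 2 * m + 1 - (j : ℕ) := by
      rw [Fin.val_rev]; omega
    by_cases hj : (j : ℕ) < m + 1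
    · -- left-group column
      have hwj : w j = 1 := by rw [hw]; simp [hj]
      have hrevge : ¬ ((Fin.rev j : ℕ) < m + 1) := by omega
      set k : ℕ := m - (j : ℕ) with hk
      have hcolj : col j = (A ^ (2 * (j : ℕ) + 1)).mulVec (Φ n) := by
        rw [hcol j]; exact dif_pos hj
      have hzexp : (A ^ (-(2 * ((Fin.rev j : ℕ) - (m + 1)) : ℤ))) = (A ^ (2 * k))⁻¹ := by
        have he : (-(2 * ((Fin.rev j : ℕ) - (m + 1)) : ℤ)) = -((2 * k : ℕ) : ℤ) := by
          push_cast; omega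
        rw [he, Matrix.zpow_neg_natCast]
      have hcolr : col (Fin.rev j) =
          T.mulVec (fun i => c (((A ^ (2 * k))⁻¹).mulVec (Φ n) i)) := by
        rw [hcol (Fin.rev j)]
        simp only [dif_neg hrevge]
        rw [hzexp]
      -- compute RHS
      have hrhs : P.mulVec (col (Fin.rev j)) i
          = ((P * T * (T⁻¹ * A ^ (2 * k) * T)).mulVec (fun l => c (Φ n l))) i := by
        rw [hcolr]
        have hfun : (fun i => c (((A ^ (2 * k))⁻¹).mulVec (Φ n) i))
            = (T⁻¹ * A ^ (2 * k) * T).mulVec (fun l => c (Φ n l)) := by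
          funext i'
          rw [hcmv, hAinvmap]
        rw [hfun, Matrix.mulVec_mulVec, Matrix.mulVec_mulVec]
      have hsplit : A⁻¹ ^ (2 * m + 1) = A⁻¹ ^ (2 * (j : ℕ) + 1) * A⁻¹ ^ (2 * k) := by
        rw [← pow_add]; congr 1; omega
      have hcan : A⁻¹ ^ (2 * m + 1) * A ^ (2 * k) = A⁻¹ ^ (2 * (j : ℕ) + 1) := by
        rw [hsplit, Matrix.mul_assoc, hPowCancel, mul_one]
      have hmat : P * T * (T⁻¹ * A ^ (2 * k) * T) = T⁻¹ * A⁻¹ ^ (2 * (j : ℕ) + 1) * T := by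
        rw [hP]
        calc T⁻¹ * A⁻¹ ^ (2 * m + 1) * T * (T⁻¹ * A ^ (2 * k) * T)
            = T⁻¹ * A⁻¹ ^ (2 * m + 1) * ((T * T⁻¹) * (A ^ (2 * k) * T)) := by
              simp only [Matrix.mul_assoc]
          _ = T⁻¹ * (A⁻¹ ^ (2 * m + 1) * A ^ (2 * k)) * T := by
              rw [hTT', one_mul]; simp only [Matrix.mul_assoc]
          _ = T⁻¹ * A⁻¹ ^ (2 * (j : ℕ) + 1) * T := by rw [hcan]
      rw [hrhs, hmat, hwj, one_mul, hcolj, hcmv, hApowmap]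
    · -- right-group column
      have hwj : w j = δ := by rw [hw]; simp [hj]
      obtain ⟨k, hk⟩ : ∃ k : ℕ, (j : ℕ) = m + 1 + k := ⟨(j : ℕ) - (m + 1), by omega⟩
      have hkm : k ≤ m := by have := j.isLt; omega
      have hrevlt : (Fin.rev j : ℕ) < m + 1 := by omega
      have hzexp : (A ^ (-(2 * ((j : ℕ) - (m + 1)) : ℤ))) = (A ^ (2 * k))⁻¹ := by
        have he : (-(2 * ((j : ℕ) - (m + 1)) : ℤ)) = -((2 * k : ℕ) : ℤ) := by
          push_cast; omega
        rw [he, Matrix.zpow_neg_natCast]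
      have hcolj : col j = T.mulVec (fun i => c (((A ^ (2 * k))⁻¹).mulVec (Φ n) i)) := by
        rw [hcol j]
        simp only [dif_neg hj]
        rw [hzexp]
      have hcolr : col (Fin.rev j) = (A ^ (2 * (Fin.rev j : ℕ) + 1)).mulVec (Φ n) := by
        rw [hcol (Fin.rev j)]; exact dif_pos hrevlt
      rw [hcolj, hcmv, hTc]
      have hinner : (fun l => c (c (((A ^ (2 * k))⁻¹).mulVec (Φ n) l)))
          = ((A ^ (2 * k))⁻¹).mulVec (Φ n) := by
        funext l
        simp [hc]
      have hrev2 : 2 * (Fin.rev j : ℕ) + 1 = 2 * (m - k) + 1 := by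
        rw [Fin.val_rev]; omega
      have hsplit : A⁻¹ ^ (2 * m + 1) = A⁻¹ ^ (2 * k) * A⁻¹ ^ (2 * (m - k) + 1) := by
        rw [← pow_add]; congr 1; omega
      have hmat : T⁻¹ * (A ^ (2 * k))⁻¹ = P * A ^ (2 * (Fin.rev j : ℕ) + 1) := by
        rw [hP, hrev2]
        calc T⁻¹ * (A ^ (2 * k))⁻¹
            = T⁻¹ * A⁻¹ ^ (2 * k) := by rw [Matrix.inv_pow']
          _ = T⁻¹ * (A⁻¹ ^ (2 * k) * (A⁻¹ ^ (2 * (m - k) + 1) * A ^ (2 * (m - k) + 1))) := by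
              rw [hPowCancel, mul_one]
          _ = T⁻¹ * A⁻¹ ^ (2 * m + 1) * A ^ (2 * (m - k) + 1) := by
              rw [hsplit]; simp only [Matrix.mul_assoc]
      rw [hinner, hcolr, Matrix.smul_mulVec, Matrix.mulVec_mulVec,
        Pi.smul_apply, smul_eq_mul, hwj, hmat, Matrix.mulVec_mulVec]
  -- assemble matrix equality
  set M : Matrix (Fin (2 * m + 2)) (Fin (2 * m + 2)) ℂ := Matrix.of fun i j => col j i with hM
  have hFM : F = M.det := rfl
  have h2 : ∀ i j : Fin (2 * m + 2),
      (P * (M.submatrix id ⇑(Fin.revPerm : Equiv.Perm (Fin (2 * m + 2))))) i j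
        = P.mulVec (col (Fin.rev j)) i := by
    intro i j
    simp [Matrix.mul_apply, Matrix.mulVec, dotProduct, Matrix.submatrix_apply, hM]
  have hmap : M.map c = Matrix.of fun i j =>
      w j * ((P * (M.submatrix id ⇑(Fin.revPerm : Equiv.Perm (Fin (2 * m + 2))))) i j) := by
    ext i j
    rw [Matrix.map_apply, Matrix.of_apply, h2 i j]
    exact key j i
  have hdet1 : c F = (∏ j, w j) * (P.det * (((Equiv.Perm.sign
      (Fin.revPerm : Equiv.Perm (Fin (2 * m + 2)))) : ℤ) * F)) := by
    have e1 : c F = (M.map c).det := by rw [hFM]; exact RingHom.map_det c M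
    rw [e1, hmap, Matrix.det_mul_row, Matrix.det_mul, Matrix.det_permute']
  -- product of the weights
  have hwprod : (∏ j, w j) = δ ^ (m + 1) := by
    simp only [hw]
    rw [Finset.prod_ite]
    rw [Finset.prod_const_one, one_mul, Finset.prod_const]
    congr 1
    have hfilter : (Finset.univ.filter fun j : Fin (2 * m + 2) => ¬ ((j : ℕ) < m + 1))
        = Finset.Ici (⟨m + 1, by omega⟩ : Fin (2 * m + 2)) := by
      ext a
      simp [Fin.le_def]
    rw [hfilter, Fin.card_Ici]
    simp
    omega
  -- the sign
  have hsign : ((Equiv.Perm.sign (Fin.revPerm : Equiv.Perm (Fin (2 * m + 2)))) : ℤ)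
      = (-1 : ℤ) ^ (m + 1) := by
    rw [sign_revPerm_even]
    push_cast
    ring
  -- determinant of P
  have hdetP : P.det = (T.det)⁻¹ * ((A.det)⁻¹) ^ (2 * m + 1) := by
    rw [hP, Matrix.det_mul, Matrix.det_pow, Matrix.det_nonsing_inv, Matrix.det_nonsing_inv,
      Ring.inverse_eq_inv']
  rw [hdet1, hwprod, hdetP, hsign]
  have hdetRHS : ((A ^ (2 * m + 1) * T).det)⁻¹ = ((A.det) ^ (2 * m + 1))⁻¹ * (T.det)⁻¹ := by
    rw [Matrix.det_mul, Matrix.det_pow, mul_inv]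
  rw [hdetRHS, neg_pow]
  push_cast
  rw [inv_pow]
  ring
end
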